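/- Let A be a simple non-unital C*-algebra and X a locally compact Hausdorff space. Then every closed ideal I of C₀(X, A) equals its own Lie normalizer: N(I) = {f ∈ C₀(X,A) : [f,g] ∈ I for all g} = I. In particular, every closed Lie ideal of C₀(X,A) squeezed between the closed commutator span of an ideal and its normalizer is itself a closed ideal. -/

import Mathlib

/-!
Let `[f, g] ∈ I` for all `g`. Every element of `A` is a value `g x`, so at a point `x` where
all of `I` vanishes, `f x` is central in `A`. A nonzero central element of a simple C⋆-algebra
would yield, by functional calculus, a central `e` fixing a nonzero element; the closed ideal
`{a | e * a = a}` would then be all of `A`, making `e` a unit. Hence `f x = 0`. At every other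
point the values of `I` are dense in `A`, by simplicity. Gluing local approximants from `I` with a
partition of unity on the compact set `{‖f‖ ≥ ε}` approximates `f` by elements of `I`; the glued
functions stay in `I` because `I` is closed and `C₀(X, A)` has an approximate unit.
-/

open scoped ZeroAtInfty BoundedContinuousFunction CompactlySupported

open Filter

namespace TwoSidedIdeal

variable {R : Type*} [NonUnitalRing R]

def fixedByMul (e : R) (he : e ∈ Set.center R) : TwoSidedIdeal R :=
  .mk' {x | e * x = x} (mul_zero e)
    (fun {x y} hx hy => by simp_all [mul_add])
    (fun {x} hx => by simp_all [mul_neg])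
    (fun {x y} (hy : e * y = y) => show e * (x * y) = x * y by
      rw [← mul_assoc, ← Semigroup.mem_center_iff.mp he x, mul_assoc, hy])
    (fun {x y} (hx : e * x = x) => show e * (x * y) = x * y by rw [← mul_assoc, hx])

lemma coe_fixedByMul (e : R) (he : e ∈ Set.center R) :
    (fixedByMul e he : Set R) = {x | e * x = x} :=
  coe_mk' ..

lemma isClosed_fixedByMul [TopologicalSpace R] [ContinuousMul R] [T2Space R]
    (e : R) (he : e ∈ Set.center R) : IsClosed (fixedByMul e he : Set R) :=
  coe_fixedByMul e he ▸ isClosed_eq (continuous_const.mul continuous_id) continuous_id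

def topologicalClosure [TopologicalSpace R] [IsTopologicalRing R] (J : TwoSidedIdeal R) :
    TwoSidedIdeal R :=
  .mk' (closure J) (subset_closure J.zero_mem)
    (fun hx hy => map_mem_closure₂ continuous_add hx hy fun _ ha _ hb => J.add_mem ha hb)
    (fun hx => map_mem_closure continuous_neg hx fun _ ha => J.neg_mem ha)
    (fun {x _} hy => map_mem_closure (continuous_const_mul x) hy fun _ ha => J.mul_mem_left x _ ha)
    (fun {_ y} hx => map_mem_closure (f := (· * y)) (continuous_mul_const y) hx
      fun _ ha => J.mul_mem_right _ y ha)

lemma coe_topologicalClosure [TopologicalSpace R] [IsTopologicalRing R] (J : TwoSidedIdeal R) :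
    (J.topologicalClosure : Set R) = closure J :=
  coe_mk' ..

end TwoSidedIdeal

section CStarAlgebra

variable {B : Type*} [NonUnitalCStarAlgebra B]

lemma IsSelfAdjoint.exists_mem_center_mul_eq_self {c : B} (hsa : IsSelfAdjoint c)
    (hc : c ∈ Set.center B) (hc0 : c ≠ 0) :
    ∃ e ∈ Set.center B, ∃ h ≠ (0 : B), e * h = h := by
  set r := ‖c‖
  have hr : 0 < r := norm_pos_iff.mpr hc0
  let clip : ℝ → ℝ := fun t => max (-(r / 2)) (min t (r / 2))
  let f : ℝ → ℝ := fun t => min (2 * |t| / r) 1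
  have hclip0 : clip 0 = 0 := by
    simp only [clip]; rw [min_eq_left (by positivity), max_eq_right (by linarith)]
  have hf0 : f 0 = 0 := by simp [f]
  -- `cfcₙ f c` acts as the identity on `cfcₙ (t - clip t) c`, which is nonzero because
  -- `‖cfcₙ clip c‖ ≤ ‖c‖ / 2`.
  have hfclip : ∀ t, f t * (t - clip t) = t - clip t := by
    intro t
    rcases le_or_gt |t| (r / 2) with ht | ht
    · rw [abs_le] at ht
      simp [clip, ht.1, ht.2]
    · have : f t = 1 := min_eq_right (by rw [le_div_iff₀ hr]; linarith)
      rw [this, one_mul]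
  refine ⟨cfcₙ f c, Semigroup.mem_center_iff.mpr fun b =>
    ((Commute.cfcₙ_real (Semigroup.mem_center_iff.mp hc b).symm f).eq).symm,
    cfcₙ (fun t => t - clip t) c, fun h0 => ?_, ?_⟩
  · have hcclip : c = cfcₙ clip c := by
      rwa [cfcₙ_sub (fun t => t) clip c (hg0 := hclip0), cfcₙ_id' ℝ c, sub_eq_zero] at h0
    have : r ≤ r / 2 :=
      calc r = ‖cfcₙ clip c‖ := by rw [← hcclip]
        _ ≤ r / 2 := norm_cfcₙ_le fun t _ => by
          rw [Real.norm_eq_abs, abs_le]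
          exact ⟨le_max_left _ _, max_le (by linarith) (min_le_right _ _)⟩
    linarith
  · rw [← cfcₙ_mul f (fun t => t - clip t) c (hf0 := hf0) (hg0 := by simp [hclip0])]
    exact cfcₙ_congr fun t _ => hfclip t

lemma exists_unit_of_mem_center
    (hsimple : ∀ J : TwoSidedIdeal B, IsClosed (J : Set B) → J = ⊥ ∨ J = ⊤)
    {a : B} (ha : a ∈ Set.center B) (ha0 : a ≠ 0) : ∃ e : B, ∀ x : B, e * x = x ∧ x * e = x := by
  have hc0 : star a * a ≠ 0 := by
    rw [← norm_ne_zero_iff, CStarRing.norm_star_mul_self]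
    simpa using ha0
  obtain ⟨e, he, h, hh0, heh⟩ := (IsSelfAdjoint.star_mul_self a).exists_mem_center_mul_eq_self
    (Set.mul_mem_center (Set.star_mem_center ha) ha) hc0
  rcases hsimple _ (TwoSidedIdeal.isClosed_fixedByMul e he) with hbot | htop
  · have : h ∈ TwoSidedIdeal.fixedByMul e he := by
      rw [← SetLike.mem_coe, TwoSidedIdeal.coe_fixedByMul]; exact heh
    rw [hbot, TwoSidedIdeal.mem_bot] at this
    exact absurd this hh0
  · refine ⟨e, fun x => ?_⟩
    have hx : e * x = x := by
      have : x ∈ TwoSidedIdeal.fixedByMul e he := by simp [htop]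
      rwa [← SetLike.mem_coe, TwoSidedIdeal.coe_fixedByMul] at this
    exact ⟨hx, (Semigroup.mem_center_iff.mp he x).trans hx⟩

lemma eq_zero_of_mem_center
    (hsimple : ∀ J : TwoSidedIdeal B, IsClosed (J : Set B) → J = ⊥ ∨ J = ⊤)
    (hnonunital : ¬ ∃ e : B, ∀ x : B, e * x = x ∧ x * e = x)
    {a : B} (ha : a ∈ Set.center B) : a = 0 :=
  by_contra fun ha0 => hnonunital (exists_unit_of_mem_center hsimple ha ha0)

variable (B) in
lemma CStarAlgebra.exists_isApproximateUnit : ∃ l : Filter B, l.IsApproximateUnit := by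
  let := CStarAlgebra.spectralOrder B
  let := CStarAlgebra.spectralOrderedRing B
  exact ⟨_, (CStarAlgebra.increasingApproximateUnit B).toIsApproximateUnit⟩

end CStarAlgebra

lemma norm_sub_sum_smul_le {ι E : Type*} [NormedAddCommGroup E] [NormedSpace ℝ E]
    (s : Finset ι) {p : ι → ℝ} {v : E} {w : ι → E} {ε : ℝ} (hp : ∀ i ∈ s, 0 ≤ p i)
    (hsum : ∑ i ∈ s, p i ≤ 1) (hw : ∀ i ∈ s, p i ≠ 0 → ‖v - w i‖ ≤ ε)
    (hv : ‖v‖ ≤ ε ∨ ∑ i ∈ s, p i = 1) :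
    ‖v - ∑ i ∈ s, p i • w i‖ ≤ ε := by
  set S := ∑ i ∈ s, p i
  have hterm : ∀ i ∈ s, ‖p i • (v - w i)‖ ≤ p i * ε := fun i hi => by
    rw [norm_smul, Real.norm_of_nonneg (hp i hi)]
    rcases eq_or_ne (p i) 0 with h0 | h0
    · simp [h0]
    · exact mul_le_mul_of_nonneg_left (hw i hi h0) (hp i hi)
  have hsplit : v - ∑ i ∈ s, p i • w i = (1 - S) • v + ∑ i ∈ s, p i • (v - w i) := by
    simp only [smul_sub, Finset.sum_sub_distrib, ← Finset.sum_smul, sub_smul, one_smul, S]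
    abel
  calc ‖v - ∑ i ∈ s, p i • w i‖
      ≤ (1 - S) * ‖v‖ + S * ε := by
        rw [hsplit, Finset.sum_mul]
        refine (norm_add_le _ _).trans (add_le_add ?_ ((norm_sum_le _ _).trans
          (Finset.sum_le_sum hterm)))
        rw [norm_smul, Real.norm_of_nonneg (by linarith)]
    _ ≤ ε := by
        rcases hv with hv | hv
        · nlinarith
        · simp [hv]

namespace ZeroAtInftyContinuousMap

variable {X E : Type*} [TopologicalSpace X] [NormedAddCommGroup E]

lemma isCompact_setOf_le_norm (f : C₀(X, E)) {ε : ℝ} (hε : 0 < ε) :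
    IsCompact {y | ε ≤ ‖f y‖} := by
  have : ∀ᶠ y in cocompact X, ‖f y‖ < ε :=
    (zero_at_infty f).norm.eventually (gt_mem_nhds (by simpa using hε))
  obtain ⟨K, hK, hKsub⟩ := mem_cocompact.mp this
  exact hK.of_isClosed_subset (isClosed_le continuous_const (by fun_prop))
    fun y (hy : ε ≤ ‖f y‖) => by_contra fun hyK => (hKsub hyK : ‖f y‖ < ε).not_ge hy

variable [NormedSpace ℝ E]

lemma exists_apply_eq [RegularSpace X] [LocallyCompactSpace X] (x : X) (v : E) :
    ∃ g : C₀(X, E), g x = v := by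
  obtain ⟨φ, hφx, -, hφc, -⟩ := exists_continuous_one_zero_of_isCompact
    (isCompact_singleton (x := x)) isClosed_empty (Set.disjoint_empty _)
  let g : C_c(X, E) := ⟨⟨fun y => φ y • v, by fun_prop⟩, hφc.smul_right⟩
  exact ⟨g, by simp [g, hφx rfl]⟩

noncomputable def smulBCF (φ : X →ᵇ ℝ) : C₀(X, E) →L[ℝ] C₀(X, E) :=
  LinearMap.mkContinuous
    { toFun g := ⟨⟨fun y => φ y • g y, by fun_prop⟩,
        (isBoundedUnder_of ⟨‖φ‖, fun y => φ.norm_coe_le_norm y⟩).smul_tendsto_zero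
          (zero_at_infty g)⟩
      map_add' _ _ := by ext; simp [smul_add]
      map_smul' _ _ := by ext; exact smul_comm .. }
    ‖φ‖ fun g => by
      rw [← norm_toBCF_eq_norm, BoundedContinuousFunction.norm_le (by positivity)]
      intro y
      refine (norm_smul_le _ _).trans (mul_le_mul (φ.norm_coe_le_norm y) ?_ (norm_nonneg _)
        (norm_nonneg _))
      exact norm_toBCF_eq_norm (f := g) ▸ g.toBCF.norm_coe_le_norm y

@[simp]
lemma smulBCF_apply (φ : X →ᵇ ℝ) (g : C₀(X, E)) (y : X) : smulBCF φ g y = φ y • g y :=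
  rfl

section Ring

variable {A : Type*} [NonUnitalNormedRing A] [NormedSpace ℝ A]

lemma mul_smulBCF [SMulCommClass ℝ A A] (φ : X →ᵇ ℝ) (g c : C₀(X, A)) :
    g * smulBCF φ c = smulBCF φ (g * c) := by
  ext y
  exact mul_smul_comm ..

def evalIdeal [RegularSpace X] [LocallyCompactSpace X] (I : TwoSidedIdeal C₀(X, A)) (x : X) :
    TwoSidedIdeal A :=
  .mk' ((fun g : C₀(X, A) => g x) '' I) ⟨0, I.zero_mem, rfl⟩
    (fun ⟨g, hg, hgx⟩ ⟨h, hh, hhx⟩ => ⟨g + h, I.add_mem hg hh, by simp [← hgx, ← hhx]⟩)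
    (fun ⟨g, hg, hgx⟩ => ⟨-g, I.neg_mem hg, by simp [← hgx]⟩)
    (fun {a _} ⟨g, hg, hgx⟩ => by
      obtain ⟨k, hk⟩ := exists_apply_eq x a
      exact ⟨k * g, I.mul_mem_left _ _ hg, by simp [← hgx, hk]⟩)
    (fun {_ a} ⟨g, hg, hgx⟩ => by
      obtain ⟨k, hk⟩ := exists_apply_eq x a
      exact ⟨g * k, I.mul_mem_right _ _ hg, by simp [← hgx, hk]⟩)

lemma coe_evalIdeal [RegularSpace X] [LocallyCompactSpace X] (I : TwoSidedIdeal C₀(X, A))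
    (x : X) : (evalIdeal I x : Set A) = (fun g : C₀(X, A) => g x) '' I :=
  TwoSidedIdeal.coe_mk' ..

end Ring

variable {A : Type*} [NonUnitalCStarAlgebra A] {I : TwoSidedIdeal C₀(X, A)}

lemma smulBCF_mem (hI : IsClosed (I : Set C₀(X, A))) (φ : X →ᵇ ℝ) {g : C₀(X, A)} (hg : g ∈ I) :
    smulBCF φ g ∈ I := by
  obtain ⟨l, hl⟩ := CStarAlgebra.exists_isApproximateUnit C₀(X, A)
  have := hl.neBot
  refine hI.mem_of_tendsto (((smulBCF φ).continuous.tendsto g).comp (hl.tendsto_mul_left g))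
    (Eventually.of_forall fun c => ?_)
  show smulBCF φ (g * c) ∈ (I : Set C₀(X, A))
  rw [← mul_smulBCF]
  exact I.mul_mem_right _ _ hg

lemma exists_mem_forall_norm_sub_le [T2Space X] [LocallyCompactSpace X]
    (hI : IsClosed (I : Set C₀(X, A))) {f : C₀(X, A)}
    (hf : ∀ x, f x ∈ closure ((fun g : C₀(X, A) => g x) '' I)) {ε : ℝ} (hε : 0 < ε) :
    ∃ h ∈ I, ∀ y, ‖f y - h y‖ ≤ ε := by
  set K := {y | ε ≤ ‖f y‖}
  have hK : IsCompact K := isCompact_setOf_le_norm f hε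
  have hloc : ∀ y : K, ∃ g ∈ I, ‖f y - g y‖ < ε := fun y => by
    obtain ⟨_, ⟨g, hg, rfl⟩, hfg⟩ := Metric.mem_closure_iff.mp (hf y) ε hε
    exact ⟨g, hg, by rwa [← dist_eq_norm]⟩
  choose g hgI hg using hloc
  let U : K → Set X := fun y => {z | ‖f z - g y z‖ < ε}
  have hU : ∀ y, IsOpen (U y) := fun y => isOpen_lt (by fun_prop) continuous_const
  obtain ⟨t, ht⟩ := hK.elim_finite_subcover U hU fun y hy =>
    Set.mem_iUnion.mpr ⟨⟨y, hy⟩, hg ⟨y, hy⟩⟩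
  obtain ⟨p, hpU, hpc⟩ := PartitionOfUnity.exists_isSubordinate_of_locallyFinite_t2space hK
    (fun i : t => U i) (fun i => hU i) (locallyFinite_of_finite _)
    (by simpa [Set.iUnion_subtype] using ht)
  refine ⟨∑ i : t, smulBCF (ofCompactSupport (p i) (p i).continuous (hpc i)) (g i),
    sum_mem fun i _ => smulBCF_mem hI _ (hgI _), fun z => ?_⟩
  have heval : ∀ F : t → C₀(X, A), (∑ i, F i) z = ∑ i, F i z :=
    fun F => map_sum (AddMonoidHom.mk' (fun g : C₀(X, A) => g z) fun _ _ => rfl) F _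
  rw [heval]
  simp only [smulBCF_apply]
  refine norm_sub_sum_smul_le (p := fun i => p i z) Finset.univ (fun i _ => p.nonneg i z)
    (by simpa [finsum_eq_sum_of_fintype] using p.sum_le_one z)
    (fun i _ hpi => (hpU i (subset_tsupport _ hpi)).le) ?_
  by_cases hz : z ∈ K
  · exact .inr (by simpa [finsum_eq_sum_of_fintype] using p.sum_eq_one hz)
  · exact .inl (not_le.mp hz).le

lemma mem_of_forall_apply_mem_closure [T2Space X] [LocallyCompactSpace X]
    (hI : IsClosed (I : Set C₀(X, A))) {f : C₀(X, A)}
    (hf : ∀ x, f x ∈ closure ((fun g : C₀(X, A) => g x) '' I)) : f ∈ I := by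
  rw [← SetLike.mem_coe, ← hI.closure_eq, Metric.mem_closure_iff]
  intro ε hε
  obtain ⟨h, hh, hle⟩ := exists_mem_forall_norm_sub_le hI hf (half_pos hε)
  refine ⟨h, hh, lt_of_le_of_lt ?_ (half_lt_self hε)⟩
  rw [dist_eq_norm, ← norm_toBCF_eq_norm, BoundedContinuousFunction.norm_le (half_pos hε).le]
  exact hle

lemma forall_apply_eq_zero_or_dense [RegularSpace X] [LocallyCompactSpace X]
    (hsimple : ∀ J : TwoSidedIdeal A, IsClosed (J : Set A) → J = ⊥ ∨ J = ⊤)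
    (I : TwoSidedIdeal C₀(X, A)) (x : X) :
    (∀ g ∈ I, g x = 0) ∨ Dense ((fun g : C₀(X, A) => g x) '' I) := by
  have hcoe := (evalIdeal I x).coe_topologicalClosure
  rw [coe_evalIdeal] at hcoe
  rcases hsimple _ (hcoe ▸ isClosed_closure) with hbot | htop
  · refine .inl fun g hg => ?_
    have : g x ∈ ((evalIdeal I x).topologicalClosure : Set A) :=
      hcoe ▸ subset_closure ⟨g, hg, rfl⟩
    simpa [hbot] using this
  · exact .inr (dense_iff_closure_eq.mpr (hcoe ▸ htop ▸ TwoSidedIdeal.coe_top A))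

end ZeroAtInftyContinuousMap

/-- Let `A` be a simple non-unital C*-algebra and `X` a locally compact
Hausdorff space.  Then every closed two-sided ideal `I` of `C₀(X, A)` equals its own Lie
normalizer: `N(I) = {f | [f,g] ∈ I for all g} = I`. -/
theorem lieNormalizer_eq_self_of_simple_nonunital
    (A : Type*) [NonUnitalNormedRing A] [StarRing A] [CStarRing A]
    [NormedSpace ℂ A] [IsScalarTower ℂ A A] [SMulCommClass ℂ A A] [StarModule ℂ A]
    [CompleteSpace A]
    (hsimple : ∀ I : TwoSidedIdeal A, IsClosed (I : Set A) → I = ⊥ ∨ I = ⊤)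
    (hnonunital : ¬ ∃ e : A, ∀ a : A, e * a = a ∧ a * e = a)
    (X : Type*) [TopologicalSpace X] [T2Space X] [LocallyCompactSpace X]
    (I : TwoSidedIdeal C₀(X, A)) (hI : IsClosed (I : Set C₀(X, A))) :
    {f : C₀(X, A) | ∀ g : C₀(X, A), f * g - g * f ∈ I} = (I : Set C₀(X, A)) := by
  let : NonUnitalCStarAlgebra A := { }
  refine Set.Subset.antisymm (fun f hf => ?_)
    fun f hf g => I.sub_mem (I.mul_mem_right _ _ hf) (I.mul_mem_left _ _ hf)
  refine ZeroAtInftyContinuousMap.mem_of_forall_apply_mem_closure hI fun x => ?_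
  rcases ZeroAtInftyContinuousMap.forall_apply_eq_zero_or_dense hsimple I x with hvanish | hdense
  · have hcentral : f x ∈ Set.center A := Semigroup.mem_center_iff.mpr fun b => by
      obtain ⟨g, rfl⟩ := ZeroAtInftyContinuousMap.exists_apply_eq x b
      exact (sub_eq_zero.mp (hvanish _ (hf g))).symm
    rw [eq_zero_of_mem_center hsimple hnonunital hcentral]
    exact subset_closure ⟨0, I.zero_mem, rfl⟩
  · exact hdense.closure_eq ▸ Set.mem_univ _
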